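/- Let P be a maximal ranked poset of rank n and let I, J, K be pairwise distinct poset ideals of P. Then the triple {I, J, K} belongs to Δ*_O(P) if and only if, after labeling so that I ⊆ J ⊆ K (such a labeling exists for any triple in Δ*_O(P)), one has: I = ∅, J and K and K ∖ J are each connected in P, and |max(J)| ≥ 2 or |max(K)| ≥ 2. -/

import Mathlib

open Finset
open scoped Classical

variable (P : Type*) [Fintype P] [PartialOrder P]

/-- The comparability graph of a poset. -/
def compGraph : SimpleGraph P where
  Adj x y := x ≠ y ∧ (x ≤ y ∨ y ≤ x)
  symm := ⟨fun _ _ h => ⟨h.1.symm, h.2.symm⟩⟩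
  loopless := ⟨fun _ h => h.1 rfl⟩

/-- A subset `W` of `P` is connected in `P` if the subgraph of the comparability
graph induced on `W` is connected (this includes `W` being nonempty). -/
def ConnIn (W : Set P) : Prop :=
  (SimpleGraph.induce W (compGraph P)).Connected

/-- A poset ideal (down-set). -/
def IsIdealF (I : Finset P) : Prop :=
  ∀ ⦃x y : P⦄, x ∈ I → y ≤ x → y ∈ I

/-- An antichain of the poset. -/
def IsAntichainF (A : Finset P) : Prop :=
  IsAntichain (· ≤ ·) (↑A : Set P)

/-- The 0/1 indicator vector of a subset of `P`. -/
noncomputable def rho (W : Finset P) : P → ℝ :=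
  fun x => if x ∈ W then 1 else 0

/-- The order polytope of `P`. -/
def orderPolytope : Set (P → ℝ) :=
  {f | (∀ x, 0 ≤ f x ∧ f x ≤ 1) ∧ ∀ ⦃x y : P⦄, x ≤ y → f y ≤ f x}

/-- The chain polytope of `P`. -/
def chainPolytope : Set (P → ℝ) :=
  {f | (∀ x, 0 ≤ f x) ∧ ∀ s : Finset P, IsChain (· ≤ ·) (↑s : Set P) → ∑ x ∈ s, f x ≤ 1}

/-- `conv {u, v}` is an edge (1-dimensional exposed face) of the polytope `S`. -/
def IsEdgeOf (S : Set (P → ℝ)) (u v : P → ℝ) : Prop :=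
  u ≠ v ∧ IsExposed ℝ S (convexHull ℝ {u, v})

/-- `conv {u, v, w}` is a triangular 2-face of the polytope `S`. -/
def IsTriFaceOf (S : Set (P → ℝ)) (u v w : P → ℝ) : Prop :=
  u ≠ v ∧ u ≠ w ∧ v ≠ w ∧ IsExposed ℝ S (convexHull ℝ {u, v, w})

/-- The set of maximal elements of a subset of `P`. -/
noncomputable def maxSet (W : Finset P) : Finset P :=
  W.filter (fun x => ∀ y ∈ W, ¬ x < y)

/-- The set of minimal elements of a subset of `P`. -/
noncomputable def minSet (W : Finset P) : Finset P :=
  W.filter (fun x => ∀ y ∈ W, ¬ y < x)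

/-- The poset ideal generated by a subset of `P`. -/
noncomputable def genIdeal (A : Finset P) : Finset P :=
  univ.filter (fun x => ∃ a ∈ A, x ≤ a)

/-- The pair `{I, J}` belongs to `E*_O(P)`. -/
noncomputable def EstarO (I J : Finset P) : Prop :=
  IsIdealF P I ∧ IsIdealF P J ∧ I ≠ J ∧
    IsEdgeOf P (orderPolytope P) (rho P I) (rho P J) ∧
    ¬ IsEdgeOf P (chainPolytope P) (rho P (maxSet P I)) (rho P (maxSet P J))

/-- The pair `{A, B}` belongs to `E*_C(P)`. -/
noncomputable def EstarC (A B : Finset P) : Prop :=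
  IsAntichainF P A ∧ IsAntichainF P B ∧ A ≠ B ∧
    IsEdgeOf P (chainPolytope P) (rho P A) (rho P B) ∧
    ¬ IsEdgeOf P (orderPolytope P) (rho P (genIdeal P A)) (rho P (genIdeal P B))

/-- `Δ_O(P)`: unordered triples of pairwise distinct poset ideals spanning a
triangular 2-face of the order polytope. -/
def DeltaO : Set (Finset (Finset P)) :=
  {T | ∃ I J K : Finset P, T = {I, J, K} ∧ I ≠ J ∧ I ≠ K ∧ J ≠ K ∧
    IsIdealF P I ∧ IsIdealF P J ∧ IsIdealF P K ∧
    IsTriFaceOf P (orderPolytope P) (rho P I) (rho P J) (rho P K)}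

/-- `Δ_C(P)`: unordered triples of pairwise distinct antichains spanning a
triangular 2-face of the chain polytope. -/
def DeltaC : Set (Finset (Finset P)) :=
  {T | ∃ A B C : Finset P, T = {A, B, C} ∧ A ≠ B ∧ A ≠ C ∧ B ≠ C ∧
    IsAntichainF P A ∧ IsAntichainF P B ∧ IsAntichainF P C ∧
    IsTriFaceOf P (chainPolytope P) (rho P A) (rho P B) (rho P C)}

/-- `Δ*_O(P)`: triples in `Δ_O(P)` at least one of whose pairs lies in `E*_O(P)`. -/
def DeltaStarO : Set (Finset (Finset P)) :=
  {T | T ∈ DeltaO P ∧ ∃ I ∈ T, ∃ J ∈ T, I ≠ J ∧ EstarO P I J}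

/-- `Δ*_C(P)`: triples in `Δ_C(P)` at least one of whose pairs lies in `E*_C(P)`. -/
def DeltaStarC : Set (Finset (Finset P)) :=
  {T | T ∈ DeltaC P ∧ ∃ A ∈ T, ∃ B ∈ T, A ≠ B ∧ EstarC P A B}

/-- `r` is a rank function exhibiting `P` as a maximal ranked poset of rank `n`:
`r` is surjective onto `{0, …, n}` and `x < y ↔ r x < r y`. -/
def IsMaxRanked (r : P → ℕ) (n : ℕ) : Prop :=
  (∀ x, r x ≤ n) ∧ (∀ i, i ≤ n → ∃ x, r x = i) ∧ (∀ x y : P, x < y ↔ r x < r y)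

/-- The rank level `P_i`. -/
noncomputable def level (r : P → ℕ) (i : ℕ) : Finset P :=
  univ.filter (fun x => r x = i)

/-- `P` contains an `X`-poset as a subposet. -/
def ContainsX : Prop :=
  ∃ a b c d e : P,
    a ≠ b ∧ a ≠ c ∧ a ≠ d ∧ a ≠ e ∧ b ≠ c ∧ b ≠ d ∧ b ≠ e ∧ c ≠ d ∧ c ≠ e ∧ d ≠ e ∧
    a < c ∧ b < c ∧ c < d ∧ c < e ∧ ¬ a ≤ b ∧ ¬ b ≤ a ∧ ¬ d ≤ e ∧ ¬ e ≤ d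

section Aux12
set_option linter.unusedSectionVars false

variable {P : Type*} [Fintype P] [PartialOrder P]

/-! ### Basic lemmas about `rho`, polytope membership, antichains, chains -/

lemma rho_nonneg (W : Finset P) (x : P) : 0 ≤ rho P W x := by
  unfold rho; split <;> norm_num

lemma rho_le_one (W : Finset P) (x : P) : rho P W x ≤ 1 := by
  unfold rho; split <;> norm_num

lemma rho_mem (W : Finset P) {x : P} (h : x ∈ W) : rho P W x = 1 := by simp [rho, h]

lemma rho_not_mem (W : Finset P) {x : P} (h : x ∉ W) : rho P W x = 0 := by simp [rho, h]

lemma rho_injective {I J : Finset P} (h : rho P I = rho P J) : I = J := by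
  ext x
  have hx := congrFun h x
  by_cases h1 : x ∈ I <;> by_cases h2 : x ∈ J <;>
    simp_all [rho]

lemma rho_ne {I J : Finset P} (h : I ≠ J) : rho P I ≠ rho P J :=
  fun hc => h (rho_injective hc)

lemma rho_empty_eq : rho P (∅ : Finset P) = 0 := by
  funext x; simp [rho]

lemma maxSet_empty : maxSet P (∅ : Finset P) = ∅ := by simp [maxSet]

lemma rho_mem_order {I : Finset P} (hI : IsIdealF P I) : rho P I ∈ orderPolytope P := by
  refine ⟨fun x => ⟨rho_nonneg _ _, rho_le_one _ _⟩, fun x y hxy => ?_⟩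
  by_cases hy : y ∈ I
  · have hx : x ∈ I := hI hy hxy
    simp [rho, hx, hy]
  · simp only [rho_not_mem _ hy]; exact rho_nonneg _ _

lemma chain_singletonP (x : P) : IsChain (· ≤ ·) (↑({x} : Finset P) : Set P) := by
  intro a ha b hb hab
  simp only [Finset.coe_singleton, Set.mem_singleton_iff] at ha hb
  exact absurd (ha.trans hb.symm) hab

lemma chain_pairP {x y : P} (hxy : x ≤ y) : IsChain (· ≤ ·) (↑({x, y} : Finset P) : Set P) := by
  intro a ha b hb hab
  simp only [Finset.coe_insert, Finset.coe_singleton, Set.mem_insert_iff,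
    Set.mem_singleton_iff] at ha hb
  rcases ha with rfl | rfl <;> rcases hb with rfl | rfl <;> tauto

lemma f_le_one_of_chainP {f : P → ℝ} (hf : f ∈ chainPolytope P) (x : P) : f x ≤ 1 := by
  have := hf.2 {x} (chain_singletonP x)
  simpa using this

lemma card_inter_le_oneP {s A : Finset P} (hs : IsChain (· ≤ ·) (↑s : Set P))
    (hA : IsAntichainF P A) : (s ∩ A).card ≤ 1 := by
  by_contra h
  push_neg at h
  obtain ⟨a, ha, b, hb, hab⟩ := Finset.one_lt_card.mp h
  rw [Finset.mem_inter] at ha hb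
  rcases hs (Finset.mem_coe.mpr ha.1) (Finset.mem_coe.mpr hb.1) hab with h1 | h1
  · exact hA (Finset.mem_coe.mpr ha.2) (Finset.mem_coe.mpr hb.2) hab h1
  · exact hA (Finset.mem_coe.mpr hb.2) (Finset.mem_coe.mpr ha.2) hab.symm h1

lemma sum_rho_eq (s A : Finset P) : ∑ x ∈ s, rho P A x = ((s ∩ A).card : ℝ) := by
  simp only [rho, Finset.sum_boole]
  norm_cast

lemma mem_chain_of_le_antichain {A : Finset P} (hA : IsAntichainF P A) {f : P → ℝ}
    (h0 : ∀ x, 0 ≤ f x) (hle : ∀ x, f x ≤ rho P A x) : f ∈ chainPolytope P := by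
  refine ⟨h0, fun s hs => ?_⟩
  calc ∑ x ∈ s, f x ≤ ∑ x ∈ s, rho P A x := Finset.sum_le_sum fun i _ => hle i
    _ = ((s ∩ A).card : ℝ) := sum_rho_eq s A
    _ ≤ 1 := by exact_mod_cast card_inter_le_oneP hs hA

lemma rho_mem_chain {A : Finset P} (hA : IsAntichainF P A) : rho P A ∈ chainPolytope P :=
  mem_chain_of_le_antichain hA (rho_nonneg A) (fun x => le_refl _)

lemma antichainF_subset {A B : Finset P} (hB : IsAntichainF P B) (hAB : A ⊆ B) :
    IsAntichainF P A :=
  hB.subset (by exact_mod_cast hAB)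

lemma maxSet_antichain (W : Finset P) : IsAntichainF P (maxSet P W) := by
  intro a ha b hb hab hle
  rw [Finset.mem_coe, maxSet, Finset.mem_filter] at ha hb
  exact ha.2 b hb.1 (lt_of_le_of_ne hle hab)

lemma mem_chain_combo {A B : Finset P} (hA : IsAntichainF P A) (hB : IsAntichainF P B)
    {a b : ℝ} (ha : 0 ≤ a) (hb : 0 ≤ b) (hab : a + b ≤ 1) :
    a • rho P A + b • rho P B ∈ chainPolytope P := by
  constructor
  · intro x
    simp only [Pi.add_apply, Pi.smul_apply, smul_eq_mul]
    have := rho_nonneg A x; have := rho_nonneg B x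
    positivity
  · intro s hs
    simp only [Pi.add_apply, Pi.smul_apply, smul_eq_mul]
    rw [Finset.sum_add_distrib, ← Finset.mul_sum, ← Finset.mul_sum, sum_rho_eq, sum_rho_eq]
    have h1 : ((s ∩ A).card : ℝ) ≤ 1 := by exact_mod_cast card_inter_le_oneP hs hA
    have h2 : ((s ∩ B).card : ℝ) ≤ 1 := by exact_mod_cast card_inter_le_oneP hs hB
    have c1 : (0:ℝ) ≤ ((s ∩ A).card : ℝ) := by positivity
    have c2 : (0:ℝ) ≤ ((s ∩ B).card : ℝ) := by positivity
    nlinarith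

/-! ### Convex hull representations -/

lemma hull3_mem_rep {u v w z : P → ℝ} (hz : z ∈ convexHull ℝ ({u, v, w} : Set (P → ℝ))) :
    ∃ a b c : ℝ, 0 ≤ a ∧ 0 ≤ b ∧ 0 ≤ c ∧ a + b + c = 1 ∧ z = a • u + b • v + c • w := by
  rw [show ({u, v, w} : Set (P → ℝ)) = insert u {v, w} from rfl,
    convexHull_insert ⟨v, by simp⟩, mem_convexJoin] at hz
  obtain ⟨p, hp, q, hq, hzseg⟩ := hz
  rw [Set.mem_singleton_iff] at hp
  subst hp
  rw [convexHull_pair] at hq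
  obtain ⟨c1, c2, hc1, hc2, hcsum, rfl⟩ := hq
  obtain ⟨d1, d2, hd1, hd2, hdsum, rfl⟩ := hzseg
  refine ⟨d1, d2 * c1, d2 * c2, hd1, by positivity, by positivity, by nlinarith, ?_⟩
  rw [smul_add, smul_smul, smul_smul, add_assoc]

lemma rep_mem_hull3 {u v w : P → ℝ} {a b c : ℝ} (ha : 0 ≤ a) (hb : 0 ≤ b) (hc : 0 ≤ c)
    (habc : a + b + c = 1) :
    a • u + b • v + c • w ∈ convexHull ℝ ({u, v, w} : Set (P → ℝ)) := by
  have h := Finset.centerMass_mem_convexHull (t := (Finset.univ : Finset (Fin 3)))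
    (w := ![a, b, c]) (z := ![u, v, w]) (s := ({u, v, w} : Set (P → ℝ)))
    (by intro i _; fin_cases i <;> simpa)
    (by simp [Fin.sum_univ_three, habc])
    (by intro i _; fin_cases i <;> simp)
  rw [Finset.centerMass] at h
  simpa [Fin.sum_univ_three, habc] using h

lemma hull_pair_empty_desc (Y : Finset P) (f : P → ℝ) :
    f ∈ convexHull ℝ ({rho P ∅, rho P Y} : Set (P → ℝ)) ↔
      ∃ t : ℝ, 0 ≤ t ∧ t ≤ 1 ∧ f = t • rho P Y := by
  rw [convexHull_pair]
  constructor
  · rintro ⟨a, b, ha, hb, hab, rfl⟩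
    exact ⟨b, hb, by linarith, by rw [rho_empty_eq]; simp⟩
  · rintro ⟨t, ht0, ht1, rfl⟩
    exact ⟨1 - t, t, by linarith, ht0, by ring, by rw [rho_empty_eq]; simp⟩

lemma rho_mem_hull3 {Q I J K : Finset P}
    (h : rho P Q ∈ convexHull ℝ ({rho P I, rho P J, rho P K} : Set (P → ℝ))) :
    Q = I ∨ Q = J ∨ Q = K := by
  obtain ⟨a, b, c, ha, hb, hc, habc, heq⟩ := hull3_mem_rep h
  have key : ∀ (A B C : Finset P) (α β γ : ℝ), 0 < α → 0 ≤ β → 0 ≤ γ → α + β + γ = 1 →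
      (∀ x, rho P Q x = α * rho P A x + β * rho P B x + γ * rho P C x) → Q = A := by
    intro A B C α β γ hα hβ hγ hsum hval
    ext x
    have hx := hval x
    have rA0 := rho_nonneg A x; have rA1 := rho_le_one A x
    have rB0 := rho_nonneg B x; have rB1 := rho_le_one B x
    have rC0 := rho_nonneg C x; have rC1 := rho_le_one C x
    constructor
    · intro hxQ
      rw [rho_mem Q hxQ] at hx
      by_contra hxA
      rw [rho_not_mem A hxA] at hx
      nlinarith
    · intro hxA
      rw [rho_mem A hxA] at hx
      by_contra hxQ
      rw [rho_not_mem Q hxQ] at hx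
      nlinarith
  have hval : ∀ x, rho P Q x = a * rho P I x + b * rho P J x + c * rho P K x := by
    intro x
    have := congrFun heq x
    simpa [Pi.add_apply, Pi.smul_apply, smul_eq_mul] using this
  rcases lt_trichotomy 0 a with ha' | ha' | ha'
  · exact Or.inl (key I J K a b c ha' hb hc habc hval)
  · rcases lt_trichotomy 0 b with hb' | hb' | hb'
    · exact Or.inr (Or.inl (key J I K b a c hb' ha hc (by linarith)
        (fun x => by rw [hval x]; ring)))
    · have hc' : 0 < c := by linarith
      exact Or.inr (Or.inr (key K I J c a b hc' ha hb (by linarith)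
        (fun x => by rw [hval x]; ring)))
    · linarith
  · linarith
  
/-! ### Exposedness scaffold -/

lemma isExposed_of_charac {S F : Set (P → ℝ)} (l : (P → ℝ) →ₗ[ℝ] ℝ) (M : ℝ)
    (hFS : F ⊆ S) (hub : ∀ g ∈ S, l g ≤ M) (hF : ∀ f ∈ F, l f = M)
    (hmax : ∀ f ∈ S, l f = M → f ∈ F) : IsExposed ℝ S F := by
  intro hne
  obtain ⟨f0, hf0⟩ := hne
  refine ⟨LinearMap.toContinuousLinearMap l, ?_⟩
  ext f
  simp only [Set.mem_setOf_eq, LinearMap.coe_toContinuousLinearMap']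
  constructor
  · intro hf
    exact ⟨hFS hf, fun y hy => by rw [hF f hf]; exact hub y hy⟩
  · rintro ⟨hfS, hmaxf⟩
    apply hmax f hfS
    have h1 := hub f hfS
    have h2 := hmaxf f0 (hFS hf0)
    rw [hF f0 hf0] at h2
    linarith

/-! ### Connectivity lemmas -/

lemma connIn_nonempty {W : Finset P} (h : ConnIn P (↑W : Set P)) : W.Nonempty := by
  obtain ⟨⟨y, hy⟩⟩ := h.nonempty
  exact ⟨y, by simpa using hy⟩

lemma const_on_conn {W : Finset P} (h : ConnIn P (↑W : Set P)) {f : P → ℝ}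
    (hf : ∀ x y : P, x ∈ W → y ∈ W → x < y → f x = f y) :
    ∀ x y : P, x ∈ W → y ∈ W → f x = f y := by
  have key : ∀ (u v : (↑W : Set P)),
      (SimpleGraph.induce (↑W : Set P) (compGraph P)).Reachable u v → f u.1 = f v.1 := by
    intro u v huv
    obtain ⟨w⟩ := huv
    induction w with
    | nil => rfl
    | @cons a b c h' p ih =>
        have hab : (compGraph P).Adj a.1 b.1 := h'
        obtain ⟨hne, hc | hc⟩ := hab
        · rw [hf a.1 b.1 (by simpa using a.2) (by simpa using b.2) (lt_of_le_of_ne hc hne)]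
          exact ih
        · rw [← hf b.1 a.1 (by simpa using b.2) (by simpa using a.2)
            (lt_of_le_of_ne hc (Ne.symm hne))]
          exact ih
  intro x y hx hy
  exact key ⟨x, by simpa using hx⟩ ⟨y, by simpa using hy⟩
    (h.preconnected ⟨x, by simpa using hx⟩ ⟨y, by simpa using hy⟩)

lemma conn_cross {J K : Finset P} (hJid : IsIdealF P J) (hJK : J ⊆ K)
    (h : ConnIn P (↑K : Set P)) (hJne : J.Nonempty) (hDne : (K \ J).Nonempty) :
    ∃ x ∈ J, ∃ y ∈ K \ J, x < y := by
  obtain ⟨u, hu⟩ := hJne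
  obtain ⟨v, hv⟩ := hDne
  have hvK : v ∈ K := (Finset.mem_sdiff.mp hv).1
  have hvJ : v ∉ J := (Finset.mem_sdiff.mp hv).2
  have key : ∀ (a b : (↑K : Set P)),
      (SimpleGraph.induce (↑K : Set P) (compGraph P)).Walk a b →
      a.1 ∈ J → b.1 ∉ J → ∃ x ∈ J, ∃ y ∈ K \ J, x < y := by
    intro a b w
    induction w with
    | nil => intro ha hb; exact absurd ha hb
    | @cons a b c h' p ih =>
        intro ha hc
        by_cases hbJ : b.1 ∈ J
        · exact ih hbJ hc
        · have hab : (compGraph P).Adj a.1 b.1 := h'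
          obtain ⟨hne, hcomp | hcomp⟩ := hab
          · exact ⟨a.1, ha, b.1, Finset.mem_sdiff.mpr ⟨by simpa using b.2, hbJ⟩,
              lt_of_le_of_ne hcomp hne⟩
          · exact absurd (hJid ha hcomp) hbJ
  obtain ⟨w⟩ := h.preconnected ⟨u, by simpa using hJK hu⟩ ⟨v, by simpa using hvK⟩
  exact key _ _ w hu hvJ

lemma conn_const_rank_subsingleton {W : Finset P} {r : P → ℕ}
    (hlt : ∀ x y : P, x < y ↔ r x < r y) {k : ℕ} (hk : ∀ x ∈ W, r x = k)
    (h : ConnIn P (↑W : Set P)) : ∀ x ∈ W, ∀ y ∈ W, x = y := by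
  have hbot : SimpleGraph.induce (↑W : Set P) (compGraph P) = ⊥ := by
    ext a b
    simp only [SimpleGraph.bot_adj, iff_false]
    intro hab
    have h' : (compGraph P).Adj a.1 b.1 := hab
    obtain ⟨hne, hc | hc⟩ := h'
    · have := (hlt a.1 b.1).mp (lt_of_le_of_ne hc hne)
      rw [hk a.1 (by simpa using a.2), hk b.1 (by simpa using b.2)] at this
      omega
    · have := (hlt b.1 a.1).mp (lt_of_le_of_ne hc (Ne.symm hne))
      rw [hk a.1 (by simpa using a.2), hk b.1 (by simpa using b.2)] at this
      omega
  intro x hx y hy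
  have := h.preconnected ⟨x, by simpa using hx⟩ ⟨y, by simpa using hy⟩
  rw [hbot, SimpleGraph.reachable_bot] at this
  exact congrArg Subtype.val this

/-! ### Linear functionals for the order polytope -/

noncomputable def ellO (U : Finset P) (E : Finset (P × P)) : (P → ℝ) →ₗ[ℝ] ℝ :=
  -((∑ x ∈ U, (LinearMap.proj x : (P → ℝ) →ₗ[ℝ] ℝ)) +
    ∑ p ∈ E, ((LinearMap.proj p.1 : (P → ℝ) →ₗ[ℝ] ℝ) - LinearMap.proj p.2))

lemma ellO_apply (U : Finset P) (E : Finset (P × P)) (f : P → ℝ) :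
    ellO U E f = -((∑ x ∈ U, f x) + ∑ p ∈ E, (f p.1 - f p.2)) := by
  simp [ellO, LinearMap.sum_apply, LinearMap.sub_apply, LinearMap.proj_apply]

lemma ellO_nonpos {U : Finset P} {E : Finset (P × P)} (hE : ∀ p ∈ E, p.1 ≤ p.2)
    {f : P → ℝ} (hf : f ∈ orderPolytope P) : ellO U E f ≤ 0 := by
  rw [ellO_apply]
  have h1 : 0 ≤ ∑ x ∈ U, f x := Finset.sum_nonneg fun x _ => (hf.1 x).1
  have h2 : 0 ≤ ∑ p ∈ E, (f p.1 - f p.2) :=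
    Finset.sum_nonneg fun p hp => sub_nonneg.mpr (hf.2 (hE p hp))
  linarith

lemma ellO_eq_zero_iff {U : Finset P} {E : Finset (P × P)} (hE : ∀ p ∈ E, p.1 ≤ p.2)
    {f : P → ℝ} (hf : f ∈ orderPolytope P) :
    ellO U E f = 0 ↔ (∀ x ∈ U, f x = 0) ∧ ∀ p ∈ E, f p.1 = f p.2 := by
  rw [ellO_apply]
  have h1 : 0 ≤ ∑ x ∈ U, f x := Finset.sum_nonneg fun x _ => (hf.1 x).1
  have h2 : 0 ≤ ∑ p ∈ E, (f p.1 - f p.2) :=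
    Finset.sum_nonneg fun p hp => sub_nonneg.mpr (hf.2 (hE p hp))
  constructor
  · intro h
    have hU : ∑ x ∈ U, f x = 0 := by linarith
    have hEz : ∑ p ∈ E, (f p.1 - f p.2) = 0 := by linarith
    constructor
    · exact fun x hx => (Finset.sum_eq_zero_iff_of_nonneg fun y _ => (hf.1 y).1).mp hU x hx
    · intro p hp
      have := (Finset.sum_eq_zero_iff_of_nonneg
        fun q hq => sub_nonneg.mpr (hf.2 (hE q hq))).mp hEz p hp
      linarith
  · rintro ⟨hU, hEz⟩
    rw [Finset.sum_eq_zero (fun x hx => hU x hx), Finset.sum_eq_zero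
      (fun p hp => by rw [hEz p hp]; ring)]
    ring

/-- The combination `s • ρ_J + t • ρ_D` used to describe faces. -/
lemma combo_apply (J D : Finset P) (s t : ℝ) (x : P) :
    (s • rho P J + t • rho P D) x = s * rho P J x + t * rho P D x := by
  simp [Pi.add_apply, Pi.smul_apply, smul_eq_mul]

lemma combo_mem_order {J K : Finset P} (hJid : IsIdealF P J) (hKid : IsIdealF P K)
    (hJK : J ⊆ K) {s t : ℝ} (ht0 : 0 ≤ t) (hts : t ≤ s) (hs1 : s ≤ 1) :
    s • rho P J + t • rho P (K \ J) ∈ orderPolytope P := by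
  have hvals : ∀ x : P, (s • rho P J + t • rho P (K \ J)) x =
      if x ∈ J then s else if x ∈ K then t else 0 := by
    intro x
    rw [combo_apply]
    by_cases hxJ : x ∈ J
    · rw [rho_mem _ hxJ, rho_not_mem _ (by simp [Finset.mem_sdiff, hxJ]), if_pos hxJ]
      ring
    · by_cases hxK : x ∈ K
      · rw [rho_not_mem _ hxJ, rho_mem _ (Finset.mem_sdiff.mpr ⟨hxK, hxJ⟩), if_neg hxJ,
          if_pos hxK]
        ring
      · rw [rho_not_mem _ hxJ, rho_not_mem _ (by simp [Finset.mem_sdiff, hxK]), if_neg hxJ,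
          if_neg hxK]
        ring
  constructor
  · intro x
    rw [hvals x]
    split_ifs <;> constructor <;> linarith
  · intro x y hxy
    rw [hvals x, hvals y]
    by_cases hyJ : y ∈ J
    · have hxJ : x ∈ J := hJid hyJ hxy
      simp [hxJ, hyJ]
    · by_cases hyK : y ∈ K
      · have hxK : x ∈ K := hKid hyK hxy
        by_cases hxJ : x ∈ J <;> simp [hxJ, hxK, hyJ, hyK, hts]
      · split_ifs <;> linarith

/-! ### Edge of the order polytope from `∅` to a connected ideal -/

lemma edgeO_empty {Y : Finset P} (hYid : IsIdealF P Y) (hconn : ConnIn P (↑Y : Set P)) :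
    IsEdgeOf P (orderPolytope P) (rho P ∅) (rho P Y) := by
  have hYne : Y.Nonempty := connIn_nonempty hconn
  obtain ⟨y0, hy0⟩ := hYne
  constructor
  · exact rho_ne (by rintro rfl; simp at hy0)
  · set U : Finset P := Finset.univ \ Y with hU
    set E : Finset (P × P) := (Y ×ˢ Y).filter (fun p => p.1 < p.2) with hEdef
    have hE : ∀ p ∈ E, p.1 ≤ p.2 := by
      intro p hp
      exact le_of_lt (Finset.mem_filter.mp hp).2
    apply isExposed_of_charac (ellO U E) 0
    · -- hull ⊆ orderPolytope
      intro f hf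
      obtain ⟨t, ht0, ht1, rfl⟩ := (hull_pair_empty_desc Y f).mp hf
      have := combo_mem_order hYid hYid (le_refl Y) (t := 0) (s := t) (le_refl 0) ht0 ht1
      simpa using this
    · exact fun g hg => ellO_nonpos hE hg
    · -- value 0 on the hull
      intro f hf
      obtain ⟨t, ht0, ht1, rfl⟩ := (hull_pair_empty_desc Y f).mp hf
      have hmem : t • rho P Y ∈ orderPolytope P := by
        have := combo_mem_order hYid hYid (le_refl Y) (t := 0) (s := t) (le_refl 0) ht0 ht1
        simpa using this
      rw [(ellO_eq_zero_iff hE hmem)]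
      constructor
      · intro x hx
        rw [hU, Finset.mem_sdiff] at hx
        simp [rho_not_mem _ hx.2]
      · intro p hp
        rw [hEdef, Finset.mem_filter, Finset.mem_product] at hp
        simp [rho_mem _ hp.1.1, rho_mem _ hp.1.2]
    · -- maximizers are in the hull
      intro f hfO hfval
      rw [ellO_eq_zero_iff hE hfO] at hfval
      obtain ⟨hZ, hEq⟩ := hfval
      have hconst : ∀ x y : P, x ∈ Y → y ∈ Y → f x = f y := by
        apply const_on_conn hconn
        intro x y hx hy hxy
        exact hEq (x, y) (by rw [hEdef]; simp [Finset.mem_filter, Finset.mem_product, hx, hy, hxy])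
      rw [hull_pair_empty_desc]
      refine ⟨f y0, (hfO.1 y0).1, (hfO.1 y0).2, ?_⟩
      funext x
      by_cases hx : x ∈ Y
      · rw [Pi.smul_apply, rho_mem _ hx, smul_eq_mul, mul_one]
        exact hconst x y0 hx hy0
      · rw [Pi.smul_apply, rho_not_mem _ hx, smul_eq_mul, mul_zero]
        exact hZ x (by rw [hU, Finset.mem_sdiff]; exact ⟨Finset.mem_univ x, hx⟩)

/-! ### Triangular face of the order polytope -/

lemma hull3_desc {J K : Finset P} (hJK : J ⊆ K) (f : P → ℝ) :
    f ∈ convexHull ℝ ({rho P ∅, rho P J, rho P K} : Set (P → ℝ)) ↔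
      ∃ s t : ℝ, 0 ≤ t ∧ t ≤ s ∧ s ≤ 1 ∧ f = s • rho P J + t • rho P (K \ J) := by
  have hpt : ∀ b c : ℝ, b • rho P J + c • rho P K =
      (b + c) • rho P J + c • rho P (K \ J) := by
    intro b c
    funext x
    rw [combo_apply, combo_apply]
    by_cases hxJ : x ∈ J
    · rw [rho_mem _ hxJ, rho_mem _ (hJK hxJ), rho_not_mem _ (by simp [Finset.mem_sdiff, hxJ])]
      ring
    · by_cases hxK : x ∈ K
      · rw [rho_not_mem _ hxJ, rho_mem _ hxK, rho_mem _ (Finset.mem_sdiff.mpr ⟨hxK, hxJ⟩)]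
        ring
      · rw [rho_not_mem _ hxJ, rho_not_mem _ hxK,
          rho_not_mem _ (by simp [Finset.mem_sdiff, hxK])]
        ring
  constructor
  · intro hf
    obtain ⟨a, b, c, ha, hb, hc, habc, rfl⟩ := hull3_mem_rep hf
    refine ⟨b + c, c, hc, by linarith, by linarith, ?_⟩
    rw [rho_empty_eq, smul_zero, zero_add, hpt]
  · rintro ⟨s, t, ht0, hts, hs1, rfl⟩
    have : s • rho P J + t • rho P (K \ J) =
        (1 - s) • rho P ∅ + (s - t) • rho P J + t • rho P K := by
      rw [rho_empty_eq, smul_zero, zero_add, hpt]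
      congr 1
      · congr 1
        ring
    rw [this]
    exact rep_mem_hull3 (by linarith) (by linarith) ht0 (by ring)

lemma tri_face {J K : Finset P} (hJid : IsIdealF P J) (hKid : IsIdealF P K) (hJK : J ⊆ K)
    (hconnJ : ConnIn P (↑J : Set P)) (hconnD : ConnIn P (↑(K \ J) : Set P))
    (hconnK : ConnIn P (↑K : Set P)) :
    IsExposed ℝ (orderPolytope P) (convexHull ℝ ({rho P ∅, rho P J, rho P K} : Set (P → ℝ))) := by
  have hJne : J.Nonempty := connIn_nonempty hconnJ
  have hDne : (K \ J).Nonempty := connIn_nonempty hconnD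
  obtain ⟨x0, hx0⟩ := hJne
  obtain ⟨y0, hy0⟩ := hDne
  obtain ⟨x1, hx1, y1, hy1, hx1y1⟩ := conn_cross hJid hJK hconnK ⟨x0, hx0⟩ ⟨y0, hy0⟩
  set U : Finset P := Finset.univ \ K with hU
  set E : Finset (P × P) :=
    (J ×ˢ J).filter (fun p => p.1 < p.2) ∪ ((K \ J) ×ˢ (K \ J)).filter (fun p => p.1 < p.2)
    with hEdef
  have hE : ∀ p ∈ E, p.1 ≤ p.2 := by
    intro p hp
    rw [hEdef, Finset.mem_union, Finset.mem_filter, Finset.mem_filter] at hp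
    rcases hp with hp | hp <;> exact le_of_lt hp.2
  apply isExposed_of_charac (ellO U E) 0
  · intro f hf
    obtain ⟨s, t, ht0, hts, hs1, rfl⟩ := (hull3_desc hJK f).mp hf
    exact combo_mem_order hJid hKid hJK ht0 hts hs1
  · exact fun g hg => ellO_nonpos hE hg
  · intro f hf
    obtain ⟨s, t, ht0, hts, hs1, rfl⟩ := (hull3_desc hJK f).mp hf
    rw [ellO_eq_zero_iff hE (combo_mem_order hJid hKid hJK ht0 hts hs1)]
    constructor
    · intro x hx
      rw [hU, Finset.mem_sdiff] at hx
      rw [combo_apply, rho_not_mem _ (fun hc => hx.2 (hJK hc)),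
        rho_not_mem _ (fun hc => hx.2 (Finset.mem_sdiff.mp hc).1)]
      ring
    · intro p hp
      rw [hEdef, Finset.mem_union, Finset.mem_filter, Finset.mem_filter,
        Finset.mem_product, Finset.mem_product] at hp
      rcases hp with ⟨⟨h1, h2⟩, _⟩ | ⟨⟨h1, h2⟩, _⟩
      · rw [combo_apply, combo_apply, rho_mem _ h1, rho_mem _ h2,
          rho_not_mem _ (by simp only [Finset.mem_sdiff]; tauto),
          rho_not_mem _ (by simp only [Finset.mem_sdiff]; tauto)]
      · have h1' : p.1 ∉ J := (Finset.mem_sdiff.mp h1).2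
        have h2' : p.2 ∉ J := (Finset.mem_sdiff.mp h2).2
        rw [combo_apply, combo_apply, rho_mem _ h1, rho_mem _ h2,
          rho_not_mem _ h1', rho_not_mem _ h2']
  · intro f hfO hfval
    rw [ellO_eq_zero_iff hE hfO] at hfval
    obtain ⟨hZ, hEq⟩ := hfval
    have hconstJ : ∀ x y : P, x ∈ J → y ∈ J → f x = f y := by
      apply const_on_conn hconnJ
      intro x y hx hy hxy
      exact hEq (x, y) (by
        rw [hEdef, Finset.mem_union]
        left
        simp [Finset.mem_filter, Finset.mem_product, hx, hy, hxy])
    have hconstD : ∀ x y : P, x ∈ K \ J → y ∈ K \ J → f x = f y := by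
      apply const_on_conn hconnD
      intro x y hx hy hxy
      exact hEq (x, y) (by
        rw [hEdef, Finset.mem_union]
        right
        simp [Finset.mem_filter, Finset.mem_product, hx, hy, hxy])
    rw [hull3_desc hJK]
    have hy1D : y1 ∈ K \ J := hy1
    refine ⟨f x1, f y1, (hfO.1 y1).1, hfO.2 (le_of_lt hx1y1), (hfO.1 x1).2, ?_⟩
    funext x
    rw [combo_apply]
    by_cases hxJ : x ∈ J
    · rw [rho_mem _ hxJ, rho_not_mem _ (by simp only [Finset.mem_sdiff]; tauto)]
      rw [mul_one, mul_zero, add_zero]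
      exact hconstJ x x1 hxJ hx1
    · by_cases hxK : x ∈ K
      · have hxD : x ∈ K \ J := Finset.mem_sdiff.mpr ⟨hxK, hxJ⟩
        rw [rho_not_mem _ hxJ, rho_mem _ hxD, mul_zero, zero_add, mul_one]
        exact hconstD x y1 hxD hy1D
      · rw [rho_not_mem _ hxJ, rho_not_mem _ (by simp only [Finset.mem_sdiff]; tauto)]
        rw [mul_zero, mul_zero, add_zero]
        exact hZ x (by rw [hU, Finset.mem_sdiff]; exact ⟨Finset.mem_univ x, hxK⟩)

/-! ### Edges of the chain polytope -/

lemma antichain_singletonP (a : P) : IsAntichainF P ({a} : Finset P) := by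
  intro x hx y hy hxy
  simp only [Finset.coe_singleton, Set.mem_singleton_iff] at hx hy
  subst hx; subst hy
  exact absurd rfl hxy

lemma chain_edge_single (a : P) :
    IsEdgeOf P (chainPolytope P) (rho P ∅) (rho P ({a} : Finset P)) := by
  constructor
  · exact rho_ne (Finset.singleton_ne_empty a).symm
  · set l : (P → ℝ) →ₗ[ℝ] ℝ := ellO (Finset.univ.erase a) ∅ with hl
    have hl_apply : ∀ f : P → ℝ, l f = -(∑ x ∈ Finset.univ.erase a, f x) := by
      intro f; rw [hl, ellO_apply]; simp
    apply isExposed_of_charac l 0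
    · intro f hf
      obtain ⟨t, ht0, ht1, rfl⟩ := (hull_pair_empty_desc _ f).mp hf
      apply mem_chain_of_le_antichain (antichain_singletonP a)
      · intro x
        rw [Pi.smul_apply, smul_eq_mul]
        exact mul_nonneg ht0 (rho_nonneg _ x)
      · intro x
        rw [Pi.smul_apply, smul_eq_mul]
        nlinarith [rho_nonneg ({a} : Finset P) x, rho_le_one ({a} : Finset P) x]
    · intro g hg
      rw [hl_apply]
      have : 0 ≤ ∑ x ∈ Finset.univ.erase a, g x := Finset.sum_nonneg fun x _ => hg.1 x
      linarith
    · intro f hf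
      obtain ⟨t, ht0, ht1, rfl⟩ := (hull_pair_empty_desc _ f).mp hf
      rw [hl_apply]
      rw [Finset.sum_eq_zero]
      · ring
      · intro x hx
        rw [Pi.smul_apply, smul_eq_mul,
          rho_not_mem _ (by simp [Finset.mem_singleton, (Finset.mem_erase.mp hx).1])]
        ring
    · intro f hfC hval
      rw [hl_apply] at hval
      have hz : ∀ x ∈ Finset.univ.erase a, f x = 0 := by
        apply (Finset.sum_eq_zero_iff_of_nonneg fun x _ => hfC.1 x).mp
        linarith
      rw [hull_pair_empty_desc]
      refine ⟨f a, hfC.1 a, f_le_one_of_chainP hfC a, ?_⟩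
      funext x
      by_cases hx : x = a
      · subst hx
        rw [Pi.smul_apply, smul_eq_mul, rho_mem _ (Finset.mem_singleton_self x), mul_one]
      · rw [Pi.smul_apply, smul_eq_mul, rho_not_mem _ (by simp [hx]), mul_zero]
        exact hz x (Finset.mem_erase.mpr ⟨hx, Finset.mem_univ x⟩)

lemma chain_edge_eq {A : Finset P} {c : P} (hcA : c ∉ A)
    (hanti : IsAntichainF P (insert c A)) :
    IsEdgeOf P (chainPolytope P) (rho P A) (rho P (insert c A)) := by
  have hAanti : IsAntichainF P A := antichainF_subset hanti (Finset.subset_insert c A)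
  constructor
  · exact rho_ne (fun h => hcA (h ▸ Finset.mem_insert_self c A))
  · set l : (P → ℝ) →ₗ[ℝ] ℝ := (∑ x ∈ A, (LinearMap.proj x : (P → ℝ) →ₗ[ℝ] ℝ)) -
      (∑ x ∈ Finset.univ \ insert c A, (LinearMap.proj x : (P → ℝ) →ₗ[ℝ] ℝ)) with hl
    have hl_apply : ∀ f : P → ℝ,
        l f = (∑ x ∈ A, f x) - ∑ x ∈ Finset.univ \ insert c A, f x := by
      intro f; simp [hl, LinearMap.sum_apply, LinearMap.proj_apply]
    apply isExposed_of_charac l (A.card : ℝ)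
    · intro f hf
      rw [convexHull_pair] at hf
      obtain ⟨d1, d2, hd1, hd2, hsum, rfl⟩ := hf
      apply mem_chain_of_le_antichain hanti
      · intro x
        rw [combo_apply]
        have := rho_nonneg A x; have := rho_nonneg (insert c A) x
        positivity
      · intro x
        rw [combo_apply]
        by_cases hxI : x ∈ insert c A
        · rw [rho_mem _ hxI]
          by_cases hxA : x ∈ A
          · rw [rho_mem _ hxA]; nlinarith
          · rw [rho_not_mem _ hxA]; nlinarith
        · rw [rho_not_mem _ hxI, rho_not_mem _ (fun h => hxI (Finset.mem_insert_of_mem h))]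
          nlinarith
    · intro g hg
      rw [hl_apply]
      have h1 : ∑ x ∈ A, g x ≤ (A.card : ℝ) := by
        calc ∑ x ∈ A, g x ≤ ∑ x ∈ A, (1 : ℝ) :=
            Finset.sum_le_sum (fun x _ => f_le_one_of_chainP hg x)
          _ = (A.card : ℝ) := by simp
      have h2 : 0 ≤ ∑ x ∈ Finset.univ \ insert c A, g x :=
        Finset.sum_nonneg fun x _ => hg.1 x
      linarith
    · intro f hf
      rw [convexHull_pair] at hf
      obtain ⟨d1, d2, hd1, hd2, hsum, rfl⟩ := hf
      rw [hl_apply]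
      have e1 : ∑ x ∈ A, (d1 • rho P A + d2 • rho P (insert c A)) x = (A.card : ℝ) := by
        rw [Finset.sum_congr rfl (fun x hx => by
          rw [combo_apply, rho_mem _ hx, rho_mem _ (Finset.mem_insert_of_mem hx)])]
        rw [Finset.sum_const, nsmul_eq_mul]
        nlinarith
      have e2 : ∑ x ∈ Finset.univ \ insert c A, (d1 • rho P A + d2 • rho P (insert c A)) x
          = 0 := by
        apply Finset.sum_eq_zero
        intro x hx
        have hxI : x ∉ insert c A := (Finset.mem_sdiff.mp hx).2
        rw [combo_apply, rho_not_mem _ (fun h => hxI (Finset.mem_insert_of_mem h)),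
          rho_not_mem _ hxI]
        ring
      rw [e1, e2]; ring
    · intro f hfC hval
      rw [hl_apply] at hval
      have h1 : ∑ x ∈ A, f x ≤ (A.card : ℝ) := by
        calc ∑ x ∈ A, f x ≤ ∑ x ∈ A, (1 : ℝ) :=
            Finset.sum_le_sum (fun x _ => f_le_one_of_chainP hfC x)
          _ = (A.card : ℝ) := by simp
      have h2 : 0 ≤ ∑ x ∈ Finset.univ \ insert c A, f x :=
        Finset.sum_nonneg fun x _ => hfC.1 x
      have hrest : ∑ x ∈ Finset.univ \ insert c A, f x = 0 := by linarith
      have hsA : ∑ x ∈ A, f x = ∑ x ∈ A, (1 : ℝ) := by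
        rw [Finset.sum_const, nsmul_eq_mul, mul_one]; linarith
      have hA1 : ∀ x ∈ A, f x = 1 :=
        (Finset.sum_eq_sum_iff_of_le (fun i _ => f_le_one_of_chainP hfC i)).mp hsA
      have hzero : ∀ x, x ∉ insert c A → f x = 0 := fun x hx =>
        (Finset.sum_eq_zero_iff_of_nonneg fun y _ => hfC.1 y).mp hrest x
          (Finset.mem_sdiff.mpr ⟨Finset.mem_univ x, hx⟩)
      rw [convexHull_pair]
      refine ⟨1 - f c, f c, by have := f_le_one_of_chainP hfC c; linarith, hfC.1 c, by ring, ?_⟩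
      funext x
      rw [combo_apply]
      by_cases hxA : x ∈ A
      · rw [rho_mem _ hxA, rho_mem _ (Finset.mem_insert_of_mem hxA), hA1 x hxA]; ring
      · by_cases hxc : x = c
        · subst hxc
          rw [rho_not_mem _ hxA, rho_mem _ (Finset.mem_insert_self x A)]; ring
        · rw [rho_not_mem _ hxA, rho_not_mem _ (by simp [Finset.mem_insert, hxc, hxA]),
            hzero x (by simp [Finset.mem_insert, hxc, hxA])]
          ring

lemma chain_edge_lt {A B : Finset P} (hA : IsAntichainF P A) (hB : IsAntichainF P B)
    (hAne : A.Nonempty) (hBne : B.Nonempty) (hcross : ∀ x ∈ A, ∀ y ∈ B, x < y) :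
    IsEdgeOf P (chainPolytope P) (rho P A) (rho P B) := by
  obtain ⟨a0, ha0⟩ := hAne
  obtain ⟨b0, hb0⟩ := hBne
  have hdisj : ∀ x, x ∈ A → x ∈ B → False := fun x hxA hxB => lt_irrefl x (hcross x hxA x hxB)
  constructor
  · exact rho_ne (fun h => hdisj a0 ha0 (h ▸ ha0))
  · set l : (P → ℝ) →ₗ[ℝ] ℝ :=
      (B.card : ℝ) • (∑ x ∈ A, (LinearMap.proj x : (P → ℝ) →ₗ[ℝ] ℝ)) +
      (A.card : ℝ) • (∑ x ∈ B, (LinearMap.proj x : (P → ℝ) →ₗ[ℝ] ℝ)) -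
      (∑ x ∈ Finset.univ \ (A ∪ B), (LinearMap.proj x : (P → ℝ) →ₗ[ℝ] ℝ)) with hl
    have hl_apply : ∀ f : P → ℝ, l f = (B.card : ℝ) * (∑ x ∈ A, f x) +
        (A.card : ℝ) * (∑ x ∈ B, f x) - ∑ x ∈ Finset.univ \ (A ∪ B), f x := by
      intro f
      simp [hl, LinearMap.sum_apply, LinearMap.proj_apply, Finset.mul_sum]
    have key : ∀ f : P → ℝ, (B.card : ℝ) * (∑ x ∈ A, f x) + (A.card : ℝ) * (∑ x ∈ B, f x)
        = ∑ p ∈ A ×ˢ B, (f p.1 + f p.2) := by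
      intro f
      rw [Finset.sum_product]
      have hinner : ∀ x : P, ∑ y ∈ B, (f x + f y) = (B.card : ℝ) * f x + ∑ y ∈ B, f y := by
        intro x
        rw [Finset.sum_add_distrib, Finset.sum_const, nsmul_eq_mul]
      rw [Finset.sum_congr rfl (fun x _ => hinner x), Finset.sum_add_distrib,
        Finset.sum_const, ← Finset.mul_sum, nsmul_eq_mul]
    have hpair_le : ∀ g ∈ chainPolytope P, ∀ p ∈ A ×ˢ B, g p.1 + g p.2 ≤ 1 := by
      intro g hg p hp
      rw [Finset.mem_product] at hp
      have hlt := hcross p.1 hp.1 p.2 hp.2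
      have := hg.2 {p.1, p.2} (chain_pairP (le_of_lt hlt))
      rwa [Finset.sum_pair (ne_of_lt hlt)] at this
    have hpairsum_le : ∀ g ∈ chainPolytope P,
        ∑ p ∈ A ×ˢ B, (g p.1 + g p.2) ≤ (A.card : ℝ) * B.card := by
      intro g hg
      calc ∑ p ∈ A ×ˢ B, (g p.1 + g p.2) ≤ ∑ _p ∈ A ×ˢ B, (1 : ℝ) :=
          Finset.sum_le_sum (hpair_le g hg)
        _ = (A.card : ℝ) * B.card := by
          rw [Finset.sum_const, nsmul_eq_mul, Finset.card_product]
          push_cast; ring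
    have hub : ∀ g ∈ chainPolytope P, l g ≤ (A.card : ℝ) * B.card := by
      intro g hg
      rw [hl_apply, key]
      have hrest : 0 ≤ ∑ x ∈ Finset.univ \ (A ∪ B), g x :=
        Finset.sum_nonneg fun x _ => hg.1 x
      have := hpairsum_le g hg
      linarith
    apply isExposed_of_charac l ((A.card : ℝ) * B.card)
    · intro f hf
      rw [convexHull_pair] at hf
      obtain ⟨d1, d2, hd1, hd2, hsum, rfl⟩ := hf
      exact mem_chain_combo hA hB hd1 hd2 (le_of_eq hsum)
    · exact hub
    · intro f hf
      rw [convexHull_pair] at hf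
      obtain ⟨d1, d2, hd1, hd2, hsum, rfl⟩ := hf
      rw [hl_apply]
      have eA : ∑ x ∈ A, (d1 • rho P A + d2 • rho P B) x = d1 * (A.card : ℝ) := by
        rw [Finset.sum_congr rfl (fun x hx => by
          rw [combo_apply, rho_mem _ hx, rho_not_mem _ (fun hc => hdisj x hx hc)])]
        rw [Finset.sum_const, nsmul_eq_mul]
        ring
      have eB : ∑ x ∈ B, (d1 • rho P A + d2 • rho P B) x = d2 * (B.card : ℝ) := by
        rw [Finset.sum_congr rfl (fun x hx => by
          rw [combo_apply, rho_mem _ hx, rho_not_mem _ (fun hc => hdisj x hc hx)])]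
        rw [Finset.sum_const, nsmul_eq_mul]
        ring
      have eR : ∑ x ∈ Finset.univ \ (A ∪ B), (d1 • rho P A + d2 • rho P B) x = 0 := by
        apply Finset.sum_eq_zero
        intro x hx
        have hxI : x ∉ A ∪ B := (Finset.mem_sdiff.mp hx).2
        rw [Finset.mem_union] at hxI
        push_neg at hxI
        rw [combo_apply, rho_not_mem _ hxI.1, rho_not_mem _ hxI.2]
        ring
      rw [eA, eB, eR]
      linear_combination ((A.card : ℝ) * (B.card : ℝ)) * hsum
    · intro f hfC hval
      rw [hl_apply] at hval
      have hrest0 : ∑ x ∈ Finset.univ \ (A ∪ B), f x = 0 := by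
        have h1 := hpairsum_le f hfC
        rw [key] at hval
        have hrest : 0 ≤ ∑ x ∈ Finset.univ \ (A ∪ B), f x :=
          Finset.sum_nonneg fun x _ => hfC.1 x
        linarith
      have hpairall : ∀ p ∈ A ×ˢ B, f p.1 + f p.2 = 1 := by
        apply (Finset.sum_eq_sum_iff_of_le (hpair_le f hfC)).mp
        rw [Finset.sum_const, nsmul_eq_mul, mul_one, Finset.card_product]
        rw [key] at hval
        push_cast
        linarith
      have hconstA : ∀ x ∈ A, f x = f a0 := by
        intro x hx
        have h1 := hpairall (x, b0) (Finset.mem_product.mpr ⟨hx, hb0⟩)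
        have h2 := hpairall (a0, b0) (Finset.mem_product.mpr ⟨ha0, hb0⟩)
        simp only at h1 h2
        linarith
      have hconstB : ∀ y ∈ B, f y = 1 - f a0 := by
        intro y hy
        have h1 := hpairall (a0, y) (Finset.mem_product.mpr ⟨ha0, hy⟩)
        simp only at h1
        linarith
      have hzero : ∀ x, x ∉ A → x ∉ B → f x = 0 := fun x hx1 hx2 =>
        (Finset.sum_eq_zero_iff_of_nonneg fun y _ => hfC.1 y).mp hrest0 x
          (Finset.mem_sdiff.mpr ⟨Finset.mem_univ x, by
            rw [Finset.mem_union]; push_neg; exact ⟨hx1, hx2⟩⟩)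
      rw [convexHull_pair]
      have hb0' : f b0 = 1 - f a0 := hconstB b0 hb0
      refine ⟨f a0, 1 - f a0, hfC.1 a0, by have := hfC.1 b0; linarith, by ring, ?_⟩
      funext x
      rw [combo_apply]
      by_cases hxA : x ∈ A
      · rw [rho_mem _ hxA, rho_not_mem _ (fun hc => hdisj x hxA hc), hconstA x hxA]; ring
      · by_cases hxB : x ∈ B
        · rw [rho_not_mem _ hxA, rho_mem _ hxB, hconstB x hxB]; ring
        · rw [rho_not_mem _ hxA, rho_not_mem _ hxB, hzero x hxA hxB]; ring

/-! ### Non-edge of the chain polytope -/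

lemma not_edge_chain {S : Finset P} (hanti : IsAntichainF P S) (h2 : 2 ≤ S.card) :
    ¬ IsEdgeOf P (chainPolytope P) (rho P ∅) (rho P S) := by
  rintro ⟨_hne, hexp⟩
  have hext := hexp.isExtreme
  obtain ⟨a, ha, b, hb, hab⟩ := Finset.one_lt_card.mp h2
  have hx1C : rho P ({a} : Finset P) ∈ chainPolytope P :=
    rho_mem_chain (antichainF_subset hanti (by simp [Finset.singleton_subset_iff, ha]))
  have hx2C : rho P (S.erase a) ∈ chainPolytope P :=
    rho_mem_chain (antichainF_subset hanti (Finset.erase_subset a S))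
  have hmid_mem : (2⁻¹ : ℝ) • rho P ∅ + (2⁻¹ : ℝ) • rho P S ∈
      convexHull ℝ ({rho P ∅, rho P S} : Set (P → ℝ)) := by
    rw [convexHull_pair]
    exact ⟨2⁻¹, 2⁻¹, by norm_num, by norm_num, by norm_num, rfl⟩
  have hmidseg : (2⁻¹ : ℝ) • rho P ∅ + (2⁻¹ : ℝ) • rho P S ∈
      openSegment ℝ (rho P ({a} : Finset P)) (rho P (S.erase a)) := by
    refine ⟨2⁻¹, 2⁻¹, by norm_num, by norm_num, by norm_num, ?_⟩
    funext x
    rw [combo_apply, combo_apply, rho_empty_eq]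
    by_cases hxa : x = a
    · subst hxa
      rw [rho_mem _ (Finset.mem_singleton_self x), rho_not_mem _ (Finset.notMem_erase x S),
        rho_mem _ ha]
      simp
    · rw [rho_not_mem _ (by simp [hxa])]
      by_cases hxS : x ∈ S
      · rw [rho_mem _ (Finset.mem_erase.mpr ⟨hxa, hxS⟩), rho_mem _ hxS]
        simp
      · rw [rho_not_mem _ (by simp [hxS]), rho_not_mem _ hxS]
        simp
  have hx1hull := hext.2 hx1C hx2C hmid_mem hmidseg
  rw [convexHull_pair] at hx1hull
  obtain ⟨α, β, hα, hβ, hsum, heq⟩ := hx1hull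
  have h_b := congrFun heq b
  have h_a := congrFun heq a
  rw [combo_apply, rho_empty_eq] at h_b h_a
  rw [rho_mem _ hb, rho_not_mem _ (by simp [Ne.symm hab] : b ∉ ({a} : Finset P))] at h_b
  rw [rho_mem _ ha, rho_mem _ (Finset.mem_singleton_self a)] at h_a
  simp only [Pi.zero_apply] at h_a h_b
  nlinarith

/-! ### Ideals -/

lemma ideal_empty : IsIdealF P (∅ : Finset P) := by
  intro x y hx
  simp at hx

lemma ideal_union {X Y : Finset P} (hX : IsIdealF P X) (hY : IsIdealF P Y) :
    IsIdealF P (X ∪ Y) := by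
  intro a b ha hba
  rw [Finset.mem_union] at ha ⊢
  rcases ha with ha | ha
  · exact Or.inl (hX ha hba)
  · exact Or.inr (hY ha hba)

lemma ideal_inter {X Y : Finset P} (hX : IsIdealF P X) (hY : IsIdealF P Y) :
    IsIdealF P (X ∩ Y) := by
  intro a b ha hba
  rw [Finset.mem_inter] at ha ⊢
  exact ⟨hX ha.1 hba, hY ha.2 hba⟩

/-! ### Structure of ideals in a maximal ranked poset -/

lemma ideal_struct {r : P → ℕ} (hlt : ∀ x y : P, x < y ↔ r x < r y)
    {X : Finset P} (hX : IsIdealF P X) (hne : X.Nonempty) :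
    ∃ k : ℕ, maxSet P X = X.filter (fun x => r x = k) ∧ (∃ x ∈ X, r x = k) ∧
      (∀ x ∈ X, r x ≤ k) ∧ (∀ y : P, r y < k → y ∈ X) := by
  set k := (X.image r).max' (hne.image r) with hk
  have himg : ∀ x ∈ X, r x ≤ k := fun x hx =>
    Finset.le_max' _ _ (Finset.mem_image_of_mem r hx)
  obtain ⟨xk, hxk, hrxk⟩ : ∃ x ∈ X, r x = k := by
    have := (X.image r).max'_mem (hne.image r)
    rw [Finset.mem_image] at this
    obtain ⟨x, hx, hrx⟩ := this
    exact ⟨x, hx, hrx⟩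
  have hdown : ∀ y : P, r y < k → y ∈ X := by
    intro y hy
    exact hX hxk (le_of_lt ((hlt y xk).mpr (by rw [hrxk]; exact hy)))
  refine ⟨k, ?_, ⟨xk, hxk, hrxk⟩, himg, hdown⟩
  ext x
  rw [maxSet, Finset.mem_filter, Finset.mem_filter]
  constructor
  · rintro ⟨hxX, hmax⟩
    refine ⟨hxX, ?_⟩
    by_contra hne'
    have hlt' : r x < k := lt_of_le_of_ne (himg x hxX) hne'
    exact hmax xk hxk ((hlt x xk).mpr (by rw [hrxk]; exact hlt'))
  · rintro ⟨hxX, hrx⟩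
    refine ⟨hxX, fun y hy hxy => ?_⟩
    have h := (hlt x y).mp hxy
    rw [hrx] at h
    exact absurd (himg y hy) (by omega)

lemma edgeC_of_ideals {r : P → ℕ} (hlt : ∀ x y : P, x < y ↔ r x < r y)
    {X Y : Finset P} (hXid : IsIdealF P X) (hYid : IsIdealF P Y)
    (hXne : X.Nonempty) (hss : X ⊂ Y) (hconn : ConnIn P (↑(Y \ X) : Set P)) :
    IsEdgeOf P (chainPolytope P) (rho P (maxSet P X)) (rho P (maxSet P Y)) := by
  have hYne : Y.Nonempty := hXne.mono hss.subset
  obtain ⟨kX, hmX, ⟨xX, hxX, hrxX⟩, hleX, hdownX⟩ := ideal_struct hlt hXid hXne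
  obtain ⟨kY, hmY, ⟨xY, hxY, hrxY⟩, hleY, hdownY⟩ := ideal_struct hlt hYid hYne
  have hkk : kX ≤ kY := by
    have := hleY xX (hss.subset hxX)
    omega
  rcases lt_or_eq_of_le hkk with hk | hk
  · apply chain_edge_lt (maxSet_antichain X) (maxSet_antichain Y)
    · rw [hmX]; exact ⟨xX, Finset.mem_filter.mpr ⟨hxX, hrxX⟩⟩
    · rw [hmY]; exact ⟨xY, Finset.mem_filter.mpr ⟨hxY, hrxY⟩⟩
    · intro x hx y hy
      rw [hmX, Finset.mem_filter] at hx
      rw [hmY, Finset.mem_filter] at hy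
      exact (hlt x y).mpr (by omega)
  · have hWrank : ∀ x ∈ Y \ X, r x = kY := by
      intro x hx
      rw [Finset.mem_sdiff] at hx
      have h1 := hleY x hx.1
      by_contra hne'
      exact hx.2 (hdownX x (by omega))
    have hDne : (Y \ X).Nonempty :=
      Finset.sdiff_nonempty.mpr (fun h => hss.ne (Finset.Subset.antisymm hss.subset h))
    obtain ⟨c, hcY⟩ := hDne
    have hc : ∀ x ∈ Y \ X, x = c :=
      fun x hx => conn_const_rank_subsingleton hlt hWrank hconn x hx c hcY
    have hmaxY : maxSet P Y = insert c (maxSet P X) := by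
      rw [hmX, hmY]
      ext z
      simp only [Finset.mem_filter, Finset.mem_insert]
      constructor
      · rintro ⟨hzY, hzr⟩
        by_cases hzX : z ∈ X
        · right; exact ⟨hzX, by omega⟩
        · left; exact hc z (Finset.mem_sdiff.mpr ⟨hzY, hzX⟩)
      · rintro (rfl | ⟨hzX, hzr⟩)
        · exact ⟨(Finset.mem_sdiff.mp hcY).1, hWrank z hcY⟩
        · exact ⟨hss.subset hzX, by omega⟩
    have hcnot : c ∉ maxSet P X := by
      rw [hmX, Finset.mem_filter]
      rintro ⟨hcX, _⟩
      exact (Finset.mem_sdiff.mp hcY).2 hcX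
    rw [hmaxY]
    exact chain_edge_eq hcnot (by rw [← hmaxY]; exact maxSet_antichain Y)

/-! ### Consequences of extremeness of the triangular face -/

lemma mem3_rho {I0 J0 K0 X : Finset P} (hX : X = I0 ∨ X = J0 ∨ X = K0) :
    rho P X ∈ ({rho P I0, rho P J0, rho P K0} : Set (P → ℝ)) := by
  rcases hX with rfl | rfl | rfl <;> simp

lemma extreme_step {I0 J0 K0 : Finset P}
    (hExt : IsExtreme ℝ (orderPolytope P)
      (convexHull ℝ ({rho P I0, rho P J0, rho P K0} : Set (P → ℝ))))
    {X Y U V : Finset P} (hX : X = I0 ∨ X = J0 ∨ X = K0) (hY : Y = I0 ∨ Y = J0 ∨ Y = K0)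
    (hU : IsIdealF P U) (hV : IsIdealF P V)
    (hsum : ∀ x, rho P U x + rho P V x = rho P X x + rho P Y x) :
    (U = I0 ∨ U = J0 ∨ U = K0) ∧ (V = I0 ∨ V = J0 ∨ V = K0) := by
  have hXH := subset_convexHull ℝ _ (mem3_rho hX)
  have hYH := subset_convexHull ℝ _ (mem3_rho hY)
  have hmid : (2⁻¹ : ℝ) • rho P X + (2⁻¹ : ℝ) • rho P Y ∈
      convexHull ℝ ({rho P I0, rho P J0, rho P K0} : Set (P → ℝ)) :=
    (convex_convexHull ℝ _) hXH hYH (by norm_num) (by norm_num) (by norm_num)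
  have hopen : (2⁻¹ : ℝ) • rho P X + (2⁻¹ : ℝ) • rho P Y ∈
      openSegment ℝ (rho P U) (rho P V) := by
    refine ⟨2⁻¹, 2⁻¹, by norm_num, by norm_num, by norm_num, ?_⟩
    funext x
    rw [combo_apply, combo_apply]
    have := hsum x
    linarith
  obtain ⟨h1, h2⟩ := And.intro (hExt.2 (rho_mem_order hU) (rho_mem_order hV) hmid hopen)
    (hExt.right_mem_of_mem_openSegment (rho_mem_order hU) (rho_mem_order hV) hmid hopen)
  exact ⟨rho_mem_hull3 h1, rho_mem_hull3 h2⟩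

lemma third_eq {I0 J0 K0 X Y Z1 Z2 : Finset P}
    (hX : X ∈ ({I0, J0, K0} : Finset (Finset P))) (hY : Y ∈ ({I0, J0, K0} : Finset (Finset P)))
    (hXY : X ≠ Y)
    (h1 : Z1 ∈ ({I0, J0, K0} : Finset (Finset P))) (h1X : Z1 ≠ X) (h1Y : Z1 ≠ Y)
    (h2 : Z2 ∈ ({I0, J0, K0} : Finset (Finset P))) (h2X : Z2 ≠ X) (h2Y : Z2 ≠ Y) :
    Z1 = Z2 := by
  set T : Finset (Finset P) := {I0, J0, K0} with hT
  have hcard : T.card ≤ 3 := by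
    rw [hT]
    calc ({I0, J0, K0} : Finset (Finset P)).card ≤ ({J0, K0} : Finset (Finset P)).card + 1 :=
        Finset.card_insert_le _ _
      _ ≤ (({K0} : Finset (Finset P)).card + 1) + 1 := by
          have := Finset.card_insert_le J0 ({K0} : Finset (Finset P))
          omega
      _ = 3 := by simp
  have hYe : Y ∈ T.erase X := Finset.mem_erase.mpr ⟨hXY.symm, hY⟩
  have hsub : ((T.erase X).erase Y).card ≤ 1 := by
    rw [Finset.card_erase_of_mem hYe, Finset.card_erase_of_mem hX]
    omega
  exact Finset.card_le_one.mp hsub _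
    (Finset.mem_erase.mpr ⟨h1Y, Finset.mem_erase.mpr ⟨h1X, h1⟩⟩) _
    (Finset.mem_erase.mpr ⟨h2Y, Finset.mem_erase.mpr ⟨h2X, h2⟩⟩)

lemma mem3_iff {I0 J0 K0 X : Finset P} :
    X ∈ ({I0, J0, K0} : Finset (Finset P)) ↔ (X = I0 ∨ X = J0 ∨ X = K0) := by
  simp [Finset.mem_insert]

lemma pair_comp {I0 J0 K0 : Finset P}
    (hExt : IsExtreme ℝ (orderPolytope P)
      (convexHull ℝ ({rho P I0, rho P J0, rho P K0} : Set (P → ℝ))))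
    (hid : ∀ W ∈ ({I0, J0, K0} : Finset (Finset P)), IsIdealF P W)
    {X Y : Finset P} (hX : X ∈ ({I0, J0, K0} : Finset (Finset P)))
    (hY : Y ∈ ({I0, J0, K0} : Finset (Finset P))) (hXY : X ≠ Y) :
    X ⊆ Y ∨ Y ⊆ X := by
  by_contra hcon
  push_neg at hcon
  have hU := ideal_union (hid X hX) (hid Y hY)
  have hV := ideal_inter (hid X hX) (hid Y hY)
  have hsum : ∀ x, rho P (X ∪ Y) x + rho P (X ∩ Y) x = rho P X x + rho P Y x := by
    intro x
    by_cases h1 : x ∈ X <;> by_cases h2 : x ∈ Y <;>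
      simp [rho, Finset.mem_union, Finset.mem_inter, h1, h2]
  obtain ⟨hUm, hVm⟩ := extreme_step hExt (mem3_iff.mp hX) (mem3_iff.mp hY) hU hV hsum
  have hUne1 : X ∪ Y ≠ X := fun h => hcon.2 (h ▸ Finset.subset_union_right)
  have hUne2 : X ∪ Y ≠ Y := fun h => hcon.1 (h ▸ Finset.subset_union_left)
  have hVne1 : X ∩ Y ≠ X := fun h => hcon.1 (h ▸ Finset.inter_subset_right)
  have hVne2 : X ∩ Y ≠ Y := fun h => hcon.2 (h ▸ Finset.inter_subset_left)
  have heq := third_eq hX hY hXY (mem3_iff.mpr hUm) hUne1 hUne2 (mem3_iff.mpr hVm) hVne1 hVne2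
  exact hcon.1 (subset_trans (subset_trans Finset.subset_union_left (le_of_eq heq))
    Finset.inter_subset_right)

lemma diff_conn {I0 J0 K0 : Finset P}
    (hExt : IsExtreme ℝ (orderPolytope P)
      (convexHull ℝ ({rho P I0, rho P J0, rho P K0} : Set (P → ℝ))))
    (hid : ∀ W ∈ ({I0, J0, K0} : Finset (Finset P)), IsIdealF P W)
    {X Y : Finset P} (hX : X ∈ ({I0, J0, K0} : Finset (Finset P)))
    (hY : Y ∈ ({I0, J0, K0} : Finset (Finset P))) (hss : X ⊂ Y) :
    ConnIn P (↑(Y \ X) : Set P) := by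
  have hXid := hid X hX
  have hYid := hid Y hY
  have hWne : (Y \ X).Nonempty :=
    Finset.sdiff_nonempty.mpr (fun h => hss.ne (Finset.Subset.antisymm hss.subset h))
  by_contra hcon
  obtain ⟨u0, hu0⟩ := hWne
  have hneV : Nonempty (↑(↑(Y \ X) : Set P)) := ⟨⟨u0, by simpa using hu0⟩⟩
  have hpre : ¬ (SimpleGraph.induce (↑(Y \ X) : Set P) (compGraph P)).Preconnected := by
    intro hp
    exact hcon (SimpleGraph.Connected.mk hp)
  rw [SimpleGraph.Preconnected] at hpre
  push_neg at hpre
  obtain ⟨u, v, huv⟩ := hpre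
  classical
  set A : Finset P := (Y \ X).filter (fun x => ∃ h : x ∈ (↑(Y \ X) : Set P),
    (SimpleGraph.induce (↑(Y \ X) : Set P) (compGraph P)).Reachable u ⟨x, h⟩) with hA
  have hAW : A ⊆ Y \ X := Finset.filter_subset _ _
  have hstep : ∀ x y : P, x ∈ A → y ∈ Y \ X → x ≠ y → (x ≤ y ∨ y ≤ x) → y ∈ A := by
    intro x y hx hy hne hcomp
    rw [hA, Finset.mem_filter] at hx ⊢
    obtain ⟨hxW, hreach⟩ := hx.2
    have hyW : y ∈ (↑(Y \ X) : Set P) := by simpa using hy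
    refine ⟨hy, hyW, ?_⟩
    have hadj : (SimpleGraph.induce (↑(Y \ X) : Set P) (compGraph P)).Adj ⟨x, hxW⟩ ⟨y, hyW⟩ :=
      ⟨hne, hcomp⟩
    exact hreach.trans (SimpleGraph.Adj.reachable hadj)
  have huA : (u : P) ∈ A := by
    rw [hA, Finset.mem_filter]
    exact ⟨by simpa using u.2, u.2, by exact SimpleGraph.Reachable.refl u⟩
  have hvA : (v : P) ∉ A := by
    rw [hA, Finset.mem_filter]
    rintro ⟨hvW, hproof, hreach⟩
    exact huv (by exact hreach)
  set B : Finset P := (Y \ X) \ A with hB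
  have hvB : (v : P) ∈ B := by
    rw [hB, Finset.mem_sdiff]
    exact ⟨by simpa using v.2, hvA⟩
  have hidA : IsIdealF P (X ∪ A) := by
    intro a b ha hba
    rw [Finset.mem_union] at ha ⊢
    rcases ha with ha | ha
    · exact Or.inl (hXid ha hba)
    · have haW := hAW ha
      have haY : a ∈ Y := (Finset.mem_sdiff.mp haW).1
      have hbY : b ∈ Y := hYid haY hba
      by_cases hbX : b ∈ X
      · exact Or.inl hbX
      · by_cases hbe : b = a
        · exact Or.inr (hbe ▸ ha)
        · exact Or.inr (hstep a b ha (Finset.mem_sdiff.mpr ⟨hbY, hbX⟩) (Ne.symm hbe)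
            (Or.inr hba))
  have hidB : IsIdealF P (X ∪ B) := by
    intro a b ha hba
    rw [Finset.mem_union] at ha ⊢
    rcases ha with ha | ha
    · exact Or.inl (hXid ha hba)
    · have haW : a ∈ Y \ X := (Finset.mem_sdiff.mp (hB ▸ ha)).1
      have haY : a ∈ Y := (Finset.mem_sdiff.mp haW).1
      have hbY : b ∈ Y := hYid haY hba
      by_cases hbX : b ∈ X
      · exact Or.inl hbX
      · have hbW : b ∈ Y \ X := Finset.mem_sdiff.mpr ⟨hbY, hbX⟩
        by_cases hbe : b = a
        · exact Or.inr (hbe ▸ ha)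
        · right
          rw [hB, Finset.mem_sdiff]
          refine ⟨hbW, fun hbA => ?_⟩
          have : a ∈ A := hstep b a hbA haW hbe (Or.inl hba)
          exact (Finset.mem_sdiff.mp (hB ▸ ha)).2 this
  have hsum : ∀ x, rho P (X ∪ A) x + rho P (X ∪ B) x = rho P X x + rho P Y x := by
    intro x
    by_cases hxX : x ∈ X
    · have hxY : x ∈ Y := hss.subset hxX
      rw [rho_mem _ (Finset.mem_union_left _ hxX), rho_mem _ (Finset.mem_union_left _ hxX),
        rho_mem _ hxX, rho_mem _ hxY]
    · by_cases hxW : x ∈ Y \ X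
      · have hxY : x ∈ Y := (Finset.mem_sdiff.mp hxW).1
        rw [rho_not_mem _ hxX, rho_mem _ hxY]
        by_cases hxA : x ∈ A
        · have hxB : x ∉ B := by rw [hB, Finset.mem_sdiff]; tauto
          rw [rho_mem _ (Finset.mem_union_right _ hxA),
            rho_not_mem _ (by rw [Finset.mem_union]; tauto)]
          ring
        · have hxB : x ∈ B := by rw [hB, Finset.mem_sdiff]; tauto
          rw [rho_mem _ (Finset.mem_union_right _ hxB),
            rho_not_mem _ (by rw [Finset.mem_union]; tauto)]
      · have hxY : x ∉ Y := fun h => hxW (Finset.mem_sdiff.mpr ⟨h, hxX⟩)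
        have hxA : x ∉ A := fun h => hxW (hAW h)
        have hxB : x ∉ B := by rw [hB, Finset.mem_sdiff]; tauto
        rw [rho_not_mem _ hxX, rho_not_mem _ hxY,
          rho_not_mem _ (by rw [Finset.mem_union]; tauto),
          rho_not_mem _ (by rw [Finset.mem_union]; tauto)]
  obtain ⟨hUm, hVm⟩ := extreme_step hExt (mem3_iff.mp hX) (mem3_iff.mp hY) hidA hidB hsum
  have hXAne1 : X ∪ A ≠ X := fun h => by
    have hmem : (u : P) ∈ X ∪ A := Finset.mem_union_right _ huA
    rw [h] at hmem
    exact (Finset.mem_sdiff.mp (hAW huA)).2 hmem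
  have hXAne2 : X ∪ A ≠ Y := fun h => by
    have hvXA : (v : P) ∉ X ∪ A := by
      rw [Finset.mem_union]
      push_neg
      exact ⟨(Finset.mem_sdiff.mp (by simpa using v.2 : (v : P) ∈ Y \ X)).2, hvA⟩
    rw [h] at hvXA
    exact hvXA (Finset.mem_sdiff.mp (by simpa using v.2 : (v : P) ∈ Y \ X)).1
  have hXBne1 : X ∪ B ≠ X := fun h => by
    have hmem : (v : P) ∈ X ∪ B := Finset.mem_union_right _ hvB
    rw [h] at hmem
    exact (Finset.mem_sdiff.mp (by simpa using v.2 : (v : P) ∈ Y \ X)).2 hmem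
  have hXBne2 : X ∪ B ≠ Y := fun h => by
    have huXB : (u : P) ∉ X ∪ B := by
      rw [Finset.mem_union]
      push_neg
      refine ⟨(Finset.mem_sdiff.mp (hAW huA)).2, ?_⟩
      rw [hB, Finset.mem_sdiff]
      push_neg
      intro _
      exact huA
    rw [h] at huXB
    exact huXB (Finset.mem_sdiff.mp (hAW huA)).1
  have heq := third_eq hX hY hss.ne (mem3_iff.mpr hUm) hXAne1 hXAne2
    (mem3_iff.mpr hVm) hXBne1 hXBne2
  have hmem : (u : P) ∈ X ∪ A := Finset.mem_union_right _ huA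
  rw [heq, Finset.mem_union] at hmem
  rcases hmem with h | h
  · exact (Finset.mem_sdiff.mp (hAW huA)).2 h
  · rw [hB, Finset.mem_sdiff] at h
    exact h.2 huA

/-! ### Symmetry and sorting -/

lemma isEdgeOf_comm {S : Set (P → ℝ)} {uu vv : P → ℝ} (h : IsEdgeOf P S uu vv) :
    IsEdgeOf P S vv uu := ⟨h.1.symm, by rw [Set.pair_comm]; exact h.2⟩

lemma estarO_comm {X Y : Finset P} (h : EstarO P X Y) : EstarO P Y X := by
  obtain ⟨h1, h2, h3, h4, h5⟩ := h
  exact ⟨h2, h1, h3.symm, isEdgeOf_comm h4, fun hc => h5 (isEdgeOf_comm hc)⟩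

lemma sort3 {A B C : Finset P} (hAB : A ≠ B) (hAC : A ≠ C) (hBC : B ≠ C)
    (cAB : A ⊆ B ∨ B ⊆ A) (cAC : A ⊆ C ∨ C ⊆ A) (cBC : B ⊆ C ∨ C ⊆ B) :
    ∃ X Y Z : Finset P, X ⊂ Y ∧ Y ⊂ Z ∧
      ({A, B, C} : Finset (Finset P)) = {X, Y, Z} := by
  have ssub : ∀ {U V : Finset P}, U ⊆ V → U ≠ V → U ⊂ V :=
    fun h1 h2 => Finset.ssubset_iff_subset_ne.mpr ⟨h1, h2⟩
  rcases cAB with h1 | h1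
  · rcases cBC with h3 | h3
    · exact ⟨A, B, C, ssub h1 hAB, ssub h3 hBC, rfl⟩
    · rcases cAC with h2 | h2
      · refine ⟨A, C, B, ssub h2 hAC, ssub h3 (Ne.symm hBC), ?_⟩
        ext x; simp only [Finset.mem_insert, Finset.mem_singleton]; tauto
      · refine ⟨C, A, B, ssub h2 (Ne.symm hAC), ssub h1 hAB, ?_⟩
        ext x; simp only [Finset.mem_insert, Finset.mem_singleton]; tauto
  · rcases cAC with h2 | h2
    · refine ⟨B, A, C, ssub h1 (Ne.symm hAB), ssub h2 hAC, ?_⟩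
      ext x; simp only [Finset.mem_insert, Finset.mem_singleton]; tauto
    · rcases cBC with h3 | h3
      · refine ⟨B, C, A, ssub h3 hBC, ssub h2 (Ne.symm hAC), ?_⟩
        ext x; simp only [Finset.mem_insert, Finset.mem_singleton]; tauto
      · refine ⟨C, B, A, ssub h3 (Ne.symm hBC), ssub h1 (Ne.symm hAB), ?_⟩
        ext x; simp only [Finset.mem_insert, Finset.mem_singleton]; tauto

end Aux12

/-- In a maximal ranked poset, a triple of pairwise distinct poset ideals
belongs to `Δ*_O(P)` iff it can be labeled `I' ⊆ J' ⊆ K'` with `I' = ∅`, `J'`, `K'`,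
`K' \ J'` each connected, and `|max J'| ≥ 2` or `|max K'| ≥ 2`. -/
theorem mem_DeltaStarO_iff
    (r : P → ℕ) (n : ℕ) (hr : IsMaxRanked P r n)
    (I J K : Finset P) (hI : IsIdealF P I) (hJ : IsIdealF P J) (hK : IsIdealF P K)
    (hIJ : I ≠ J) (hIK : I ≠ K) (hJK : J ≠ K) :
    ({I, J, K} : Finset (Finset P)) ∈ DeltaStarO P ↔
      ∃ I' J' K' : Finset P, ({I', J', K'} : Set (Finset P)) = {I, J, K} ∧
        I' ⊆ J' ∧ J' ⊆ K' ∧ I' = ∅ ∧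
        ConnIn P (↑J') ∧ ConnIn P (↑K') ∧ ConnIn P (↑(K' \ J')) ∧
        (2 ≤ (maxSet P J').card ∨ 2 ≤ (maxSet P K').card) := by
  have hlt : ∀ x y : P, x < y ↔ r x < r y := hr.2.2
  constructor
  · rintro ⟨hDelta, X, hXT, Y, hYT, hXYne, hEstar⟩
    obtain ⟨I0, J0, K0, hTeq, hIJ0, hIK0, hJK0, hI0, hJ0, hK0, hTri⟩ := hDelta
    rw [hTeq] at hXT hYT
    have hExt := hTri.2.2.2.isExtreme
    have hid : ∀ W ∈ ({I0, J0, K0} : Finset (Finset P)), IsIdealF P W := by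
      intro W hW
      rcases mem3_iff.mp hW with rfl | rfl | rfl <;> assumption
    have hmemI0 : I0 ∈ ({I0, J0, K0} : Finset (Finset P)) := mem3_iff.mpr (Or.inl rfl)
    have hmemJ0 : J0 ∈ ({I0, J0, K0} : Finset (Finset P)) := mem3_iff.mpr (Or.inr (Or.inl rfl))
    have hmemK0 : K0 ∈ ({I0, J0, K0} : Finset (Finset P)) :=
      mem3_iff.mpr (Or.inr (Or.inr rfl))
    have hIJc := pair_comp hExt hid hmemI0 hmemJ0 hIJ0
    have hIKc := pair_comp hExt hid hmemI0 hmemK0 hIK0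
    have hJKc := pair_comp hExt hid hmemJ0 hmemK0 hJK0
    obtain ⟨C1, C2, C3, h12, h23, hperm⟩ := sort3 hIJ0 hIK0 hJK0 hIJc hIKc hJKc
    have hXY : X ⊆ Y ∨ Y ⊆ X := pair_comp hExt hid hXT hYT hXYne
    have main : ∀ X' Y' : Finset P, X' ∈ ({I0, J0, K0} : Finset (Finset P)) →
        Y' ∈ ({I0, J0, K0} : Finset (Finset P)) → X' ⊂ Y' → EstarO P X' Y' →
        X' = ∅ ∧ 2 ≤ (maxSet P Y').card := by
      intro X' Y' hX' hY' hss hE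
      obtain ⟨_, _, _, hedge, hnot⟩ := hE
      have hconnD := diff_conn hExt hid hX' hY' hss
      by_cases hX'e : X' = ∅
      · subst hX'e
        refine ⟨rfl, ?_⟩
        have hY'ne : Y'.Nonempty :=
          Finset.nonempty_iff_ne_empty.mpr (fun h => hss.ne h.symm)
        obtain ⟨kY, hmY, ⟨xY, hxY, hrxY⟩, _, _⟩ := ideal_struct hlt (hid Y' hY') hY'ne
        have hmne : (maxSet P Y').Nonempty :=
          ⟨xY, by rw [hmY, Finset.mem_filter]; exact ⟨hxY, hrxY⟩⟩
        by_contra hcard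
        push_neg at hcard
        have hone : (maxSet P Y').card = 1 := by
          have := Finset.card_pos.mpr hmne
          omega
        obtain ⟨a, ha⟩ := Finset.card_eq_one.mp hone
        apply hnot
        rw [maxSet_empty, ha]
        exact chain_edge_single a
      · exact absurd (edgeC_of_ideals hlt (hid X' hX') (hid Y' hY')
          (Finset.nonempty_iff_ne_empty.mpr hX'e) hss hconnD) hnot
    have hpair : ∃ Sm Bg : Finset P, Sm ∈ ({I0, J0, K0} : Finset (Finset P)) ∧
        Bg ∈ ({I0, J0, K0} : Finset (Finset P)) ∧ Sm = ∅ ∧ Bg.Nonempty ∧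
        2 ≤ (maxSet P Bg).card := by
      rcases hXY with hsub | hsub
      · have hss := Finset.ssubset_iff_subset_ne.mpr ⟨hsub, hXYne⟩
        obtain ⟨hXe, hcard⟩ := main X Y hXT hYT hss hEstar
        refine ⟨X, Y, hXT, hYT, hXe, ?_, hcard⟩
        exact Finset.nonempty_iff_ne_empty.mpr (fun h => hss.ne (by rw [hXe, h]))
      · have hss := Finset.ssubset_iff_subset_ne.mpr ⟨hsub, hXYne.symm⟩
        obtain ⟨hYe, hcard⟩ := main Y X hYT hXT hss (estarO_comm hEstar)
        refine ⟨Y, X, hYT, hXT, hYe, ?_, hcard⟩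
        exact Finset.nonempty_iff_ne_empty.mpr (fun h => hss.ne (by rw [hYe, h]))
    obtain ⟨Sm, Bg, hSmT, hBgT, hSmE, hBgne, hcardBg⟩ := hpair
    have hC1e : C1 = ∅ := by
      have hSmC : Sm ∈ ({C1, C2, C3} : Finset (Finset P)) := by rw [← hperm]; exact hSmT
      rcases mem3_iff.mp hSmC with h | h | h
      · rw [← h]; exact hSmE
      · exfalso
        have h' := h12
        rw [← h, hSmE] at h'
        exact h'.ne (Finset.subset_empty.mp h'.subset)
      · exfalso
        have h' := h12.trans h23
        rw [← h, hSmE] at h'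
        exact h'.ne (Finset.subset_empty.mp h'.subset)
    have hBgC : Bg = C2 ∨ Bg = C3 := by
      rcases mem3_iff.mp (show Bg ∈ ({C1, C2, C3} : Finset (Finset P)) by
        rw [← hperm]; exact hBgT) with h | h | h
      · exact absurd (h.trans hC1e) (Finset.nonempty_iff_ne_empty.mp hBgne)
      · exact Or.inl h
      · exact Or.inr h
    have hC1T : C1 ∈ ({I0, J0, K0} : Finset (Finset P)) := by
      rw [hperm]; exact mem3_iff.mpr (Or.inl rfl)
    have hC2T : C2 ∈ ({I0, J0, K0} : Finset (Finset P)) := by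
      rw [hperm]; exact mem3_iff.mpr (Or.inr (Or.inl rfl))
    have hC3T : C3 ∈ ({I0, J0, K0} : Finset (Finset P)) := by
      rw [hperm]; exact mem3_iff.mpr (Or.inr (Or.inr rfl))
    have hconn2 : ConnIn P (↑C2 : Set P) := by
      have := diff_conn hExt hid hC1T hC2T h12
      rwa [hC1e, Finset.sdiff_empty] at this
    have hconn3 : ConnIn P (↑C3 : Set P) := by
      have := diff_conn hExt hid hC1T hC3T (h12.trans h23)
      rwa [hC1e, Finset.sdiff_empty] at this
    have hconn23 : ConnIn P (↑(C3 \ C2) : Set P) := diff_conn hExt hid hC2T hC3T h23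
    refine ⟨C1, C2, C3, ?_, by rw [hC1e]; exact Finset.empty_subset C2, h23.subset, hC1e,
      hconn2, hconn3, hconn23, ?_⟩
    · have hcoe : (↑({I, J, K} : Finset (Finset P)) : Set (Finset P)) =
          (↑({C1, C2, C3} : Finset (Finset P)) : Set (Finset P)) := by
        rw [hTeq, hperm]
      have h1 : (↑({I, J, K} : Finset (Finset P)) : Set (Finset P)) =
          ({I, J, K} : Set (Finset P)) := by
        simp
      have h2 : (↑({C1, C2, C3} : Finset (Finset P)) : Set (Finset P)) =
          ({C1, C2, C3} : Set (Finset P)) := by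
        simp
      rw [← h2, ← hcoe, h1]
    · rcases hBgC with h | h
      · exact Or.inl (h ▸ hcardBg)
      · exact Or.inr (h ▸ hcardBg)
  · rintro ⟨I', J', K', hsetEq, _hIJ'sub, hJK'sub, hI'empty, hconnJ', hconnK', hconnD', hcard⟩
    subst hI'empty
    have hfinEq : ({I, J, K} : Finset (Finset P)) = {∅, J', K'} := by
      apply Finset.coe_injective
      have h1 : (↑({I, J, K} : Finset (Finset P)) : Set (Finset P)) =
          ({I, J, K} : Set (Finset P)) := by simp
      have h2 : (↑({∅, J', K'} : Finset (Finset P)) : Set (Finset P)) =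
          ({∅, J', K'} : Set (Finset P)) := by simp
      rw [h1, h2, hsetEq]
    have hJ'ne : J'.Nonempty := connIn_nonempty hconnJ'
    have hD'ne : (K' \ J').Nonempty := connIn_nonempty hconnD'
    have hJ'K'ne : J' ≠ K' := by
      intro h
      rw [h, Finset.sdiff_self] at hD'ne
      exact Finset.not_nonempty_empty hD'ne
    have hneJ : (∅ : Finset P) ≠ J' :=
      fun h => Finset.not_nonempty_empty (h ▸ hJ'ne)
    have hK'ne : K'.Nonempty := hJ'ne.mono hJK'sub
    have hneK : (∅ : Finset P) ≠ K' :=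
      fun h => Finset.not_nonempty_empty (h ▸ hK'ne)
    have hidJ' : IsIdealF P J' := by
      have hmem : J' ∈ ({I, J, K} : Set (Finset P)) := by
        rw [← hsetEq]; simp
      simp only [Set.mem_insert_iff, Set.mem_singleton_iff] at hmem
      rcases hmem with rfl | rfl | rfl <;> assumption
    have hidK' : IsIdealF P K' := by
      have hmem : K' ∈ ({I, J, K} : Set (Finset P)) := by
        rw [← hsetEq]; simp
      simp only [Set.mem_insert_iff, Set.mem_singleton_iff] at hmem
      rcases hmem with rfl | rfl | rfl <;> assumption
    constructor
    · refine ⟨∅, J', K', hfinEq, hneJ, hneK, hJ'K'ne, ideal_empty, hidJ', hidK', ?_⟩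
      exact ⟨rho_ne hneJ, rho_ne hneK, rho_ne hJ'K'ne,
        tri_face hidJ' hidK' hJK'sub hconnJ' hconnD' hconnK'⟩
    · have hmemE : (∅ : Finset P) ∈ ({I, J, K} : Finset (Finset P)) := by
        rw [hfinEq]; exact Finset.mem_insert_self _ _
      rcases hcard with h2 | h2
      · refine ⟨∅, hmemE, J', ?_, hneJ, ?_⟩
        · rw [hfinEq]
          exact Finset.mem_insert_of_mem (Finset.mem_insert_self _ _)
        · refine ⟨ideal_empty, hidJ', hneJ, edgeO_empty hidJ' hconnJ', ?_⟩
          rw [maxSet_empty]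
          exact not_edge_chain (maxSet_antichain J') h2
      · refine ⟨∅, hmemE, K', ?_, hneK, ?_⟩
        · rw [hfinEq]
          exact Finset.mem_insert_of_mem (Finset.mem_insert_of_mem
            (Finset.mem_singleton_self _))
        · refine ⟨ideal_empty, hidK', hneK, edgeO_empty hidK' hconnK', ?_⟩
          rw [maxSet_empty]
          exact not_edge_chain (maxSet_antichain K') h2
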